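/- Let v and w be purely imaginary octonions with ‖v‖ = ‖w‖ = 1. Then for every octonion x, (v̂ ∘ ŵ) ∘ x̂ ∘ (ŵ ∘ v̂) = ŷ where y = s_v(s_w(x)) and s_u(z) := 2⟨z,u⟩u − z. That is, conjugation by v̂ ∘ ŵ (whose inverse is ŵ ∘ v̂) sends x̂ to the hat of the composition of the reflection along w followed by the reflection along v applied to x. -/

import Mathlib

noncomputable section

/-- The octonions, realized as pairs of real quaternions (Cayley–Dickson construction). -/
abbrev Octonion : Type := Quaternion ℝ × Quaternion ℝ

/-- Octonion multiplication: `(a,b)·(c,d) = (a·c − conj(d)·b, d·a + b·conj(c))`. -/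
def omul (x y : Octonion) : Octonion :=
  (x.1 * y.1 - star y.2 * x.2, y.2 * x.1 + x.2 * star y.1)

/-- Octonion conjugation: `conj (a,b) = (conj a, −b)`. -/
def oconj (x : Octonion) : Octonion := (star x.1, -x.2)

/-- The unit octonion `1 = (1,0)`. -/
def oone : Octonion := (1, 0)

/-- The real inner product `⟨(a,b),(c,d)⟩ = Re(a·conj c) + Re(b·conj d)` on the octonions. -/
def oinner (x y : Octonion) : ℝ := (x.1 * star y.1).re + (x.2 * star y.2).re

/-- The Clifford-algebra embedding: `x̂ (y,z) = (−conj(x)·z, x·y)` on `𝕆 × 𝕆`. -/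
def hat (x : Octonion) (p : Octonion × Octonion) : Octonion × Octonion :=
  (-(omul (oconj x) p.2), omul x p.1)

/-- The reflection along a unit octonion `u`: `s_u(z) = 2⟨z,u⟩u − z`. -/
def oreflect (u z : Octonion) : Octonion := (2 * oinner z u) • u - z

/-!
The maps `x̂` satisfy the Clifford relation `x̂ ŷ + ŷ x̂ = -2⟨x, y⟩`, which is the polarized
octonion identity `conj x (y a) + conj y (x a) = 2⟨x, y⟩ a`, applied to `x, y` in the first
component and to `conj x, conj y` in the second. For a unit `u` this gives `û² = -1`, hence
`û ẑ û = -2⟨z, u⟩ û - û û ẑ = -(s_u z)^`. Applying this with `u = w` and then with `u = v`,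
the two signs cancel.
-/

lemma oconj_oconj (x : Octonion) : oconj (oconj x) = x := by
  simp [oconj]

lemma oconj_sub (x y : Octonion) : oconj (x - y) = oconj x - oconj y := by
  simp only [oconj, Prod.fst_sub, Prod.snd_sub, star_sub, Prod.mk_sub_mk, neg_sub']

lemma oconj_smul (c : ℝ) (x : Octonion) : oconj (c • x) = c • oconj x := by
  simp [oconj]

lemma oinner_oconj_oconj (x y : Octonion) : oinner (oconj x) (oconj y) = oinner x y := by
  simp [oinner, oconj, Quaternion.re_mul]

lemma omul_sub_left (x y a : Octonion) : omul (x - y) a = omul x a - omul y a := by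
  simp only [omul, Prod.fst_sub, Prod.snd_sub, sub_mul, mul_sub, Prod.mk_sub_mk]
  congr 1 <;> abel

lemma omul_sub_right (x a b : Octonion) : omul x (a - b) = omul x a - omul x b := by
  simp only [omul, Prod.fst_sub, Prod.snd_sub, star_sub, sub_mul, mul_sub, Prod.mk_sub_mk]
  congr 1 <;> abel

lemma omul_neg_right (x a : Octonion) : omul x (-a) = -omul x a := by
  ext <;> simp [omul] <;> abel

lemma omul_smul_left (c : ℝ) (x a : Octonion) : omul (c • x) a = c • omul x a := by
  simp [omul, smul_sub, smul_add]

lemma omul_smul_right (c : ℝ) (x a : Octonion) : omul x (c • a) = c • omul x a := by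
  simp [omul, smul_sub, smul_add]

lemma omul_oconj_omul_add_omul_oconj_omul (x y a : Octonion) :
    omul (oconj x) (omul y a) + omul (oconj y) (omul x a) = (2 * oinner x y) • a := by
  obtain ⟨x1, x2⟩ := x
  obtain ⟨y1, y2⟩ := y
  obtain ⟨a1, a2⟩ := a
  simp only [omul, oconj, oinner, Prod.ext_iff, Prod.smul_mk, Prod.mk_add_mk]
  constructor <;> ext <;>
    simp [Quaternion.re_mul, Quaternion.imI_mul, Quaternion.imJ_mul, Quaternion.imK_mul] <;> ring

lemma hat_sub_left (x y : Octonion) (p : Octonion × Octonion) :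
    hat (x - y) p = hat x p - hat y p := by
  simp only [hat, oconj_sub, omul_sub_left, neg_sub', Prod.mk_sub_mk]

lemma hat_smul_left (c : ℝ) (x : Octonion) (p : Octonion × Octonion) :
    hat (c • x) p = c • hat x p := by
  simp only [hat, oconj_smul, omul_smul_left, smul_neg, Prod.smul_mk]

lemma hat_sub (x : Octonion) (p q : Octonion × Octonion) :
    hat x (p - q) = hat x p - hat x q := by
  simp only [hat, Prod.fst_sub, Prod.snd_sub, omul_sub_right, neg_sub', Prod.mk_sub_mk]

lemma hat_smul (c : ℝ) (x : Octonion) (p : Octonion × Octonion) :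
    hat x (c • p) = c • hat x p := by
  simp only [hat, Prod.smul_fst, Prod.smul_snd, omul_smul_right, smul_neg, Prod.smul_mk]

lemma hat_neg (x : Octonion) (p : Octonion × Octonion) : hat x (-p) = -hat x p := by
  simp only [hat, Prod.fst_neg, Prod.snd_neg, omul_neg_right, Prod.neg_mk]

lemma hat_hat_add_hat_hat (x y : Octonion) (p : Octonion × Octonion) :
    hat x (hat y p) + hat y (hat x p) = (-(2 * oinner x y)) • p := by
  have h₁ := omul_oconj_omul_add_omul_oconj_omul x y p.1
  have h₂ := omul_oconj_omul_add_omul_oconj_omul (oconj x) (oconj y) p.2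
  rw [oconj_oconj, oconj_oconj, oinner_oconj_oconj] at h₂
  refine Prod.ext ?_ ?_
  · simp only [hat, Prod.fst_add, Prod.smul_fst]
    rw [neg_smul, ← h₁, neg_add]
  · simp only [hat, Prod.snd_add, Prod.smul_snd, omul_neg_right]
    rw [neg_smul, ← h₂, neg_add]

lemma hat_hat_self (x : Octonion) (p : Octonion × Octonion) :
    hat x (hat x p) = (-oinner x x) • p := by
  have h := hat_hat_add_hat_hat x x p
  rw [← two_smul ℝ, show -(2 * oinner x x) = 2 * -oinner x x by ring, ← smul_smul] at h
  exact smul_right_injective _ two_ne_zero h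

lemma hat_hat_hat_of_oinner_self_eq_one {u : Octonion} (hu : oinner u u = 1) (z : Octonion)
    (p : Octonion × Octonion) : hat u (hat z (hat u p)) = -hat (oreflect u z) p := by
  calc hat u (hat z (hat u p))
      = hat u ((-(2 * oinner z u)) • p - hat u (hat z p)) := by
        rw [eq_sub_of_add_eq (hat_hat_add_hat_hat z u p)]
    _ = (-(2 * oinner z u)) • hat u p + hat z p := by
        rw [hat_sub, hat_smul, hat_hat_self, hu, neg_one_smul, sub_neg_eq_add]
    _ = -hat (oreflect u z) p := by
        rw [oreflect, hat_sub_left, hat_smul_left]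
        module

theorem hat_conj_pair_reflections_general (v w : Octonion)
    (hv : oinner v v = 1) (hw : oinner w w = 1) :
    ∀ (x : Octonion) (p : Octonion × Octonion),
      hat v (hat w (hat x (hat w (hat v p)))) = hat (oreflect v (oreflect w x)) p := by
  intro x p
  rw [hat_hat_hat_of_oinner_self_eq_one hw, hat_neg, hat_hat_hat_of_oinner_self_eq_one hv, neg_neg]

/-- For purely imaginary unit octonions `v, w` and any octonion `x`,
`(v̂ ∘ ŵ) ∘ x̂ ∘ (ŵ ∘ v̂) = ŷ` where `y = s_v (s_w x)`: conjugation by `v̂ ∘ ŵ` acts as the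
composition of the reflection along `w` followed by the reflection along `v`. -/
theorem hat_conj_pair_reflections (v w : Octonion)
    (hv1 : oinner v oone = 0) (hw1 : oinner w oone = 0)
    (hv : oinner v v = 1) (hw : oinner w w = 1) :
    ∀ (x : Octonion) (p : Octonion × Octonion),
      hat v (hat w (hat x (hat w (hat v p)))) = hat (oreflect v (oreflect w x)) p :=
  hat_conj_pair_reflections_general v w hv hw
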